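/- arXiv:1904.08037 — 5 statements merged into one kernel-verified Lean document; each statement's English description precedes it below -/
import Mathlib

section
/- Let V, A, deg, D, M be as in the lazy random walk setting, let t₀ be a nonnegative integer and ε > 0. For a vertex u define Z_u := {v ∈ V : ρ_t^v(u) ≥ 2ε for at least one integer t ∈ [0, t₀]}. Then Vol(Z_u) ≤ (t₀+1)/(2ε), and for any two vertices u₁, u₂, Vol(Z_{u₁} ∪ Z_{u₂}) ≤ (t₀+1)/ε. -/
/-!
The lazy walk `M` is column stochastic and reversible with respect to `deg`:
`(M ^ t) u v * deg v = (M ^ t) v u * deg u`. So if `v ∈ Z u` through a time `t ≤ t₀`, then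
`2 * ε * deg v ≤ (M ^ t) v u ≤ ∑_{s ≤ t₀} (M ^ s) v u`, and summing over `v` gives
`2 * ε * Vol (Z u) ≤ ∑_{s ≤ t₀} ∑_v (M ^ s) v u = t₀ + 1`. The union bound follows.
-/

open Finset Matrix

namespace Matrix

variable {V : Type*} [Fintype V] [DecidableEq V]

/-- `(P * diagonal π).IsSymm` is detailed balance, `P u v * π v = P v u * π u`. -/
theorem IsSymm.pow_mul_diagonal {R : Type*} [CommSemiring R] {P : Matrix V V R} {π : V → R}
    (hP : (P * diagonal π).IsSymm) (t : ℕ) : (P ^ t * diagonal π).IsSymm := by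
  induction t with
  | zero => simp [isSymm_diagonal π]
  | succ t ih =>
    calc (P ^ (t + 1) * diagonal π)ᵀ = P ^ t * (P * diagonal π)ᵀ := by
          rw [pow_succ', Matrix.mul_assoc, transpose_mul, ih.eq, transpose_mul,
            diagonal_transpose, Matrix.mul_assoc]
      _ = P ^ (t + 1) * diagonal π := by
          rw [hP.eq, pow_succ, Matrix.mul_assoc]

theorem sum_range_pow_apply_le {P : Matrix V V ℝ} (hP : P ∈ colStochastic ℝ V) (s : Finset V)
    (u : V) (n : ℕ) : ∑ v ∈ s, ∑ t ∈ range n, (P ^ t) v u ≤ n := by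
  rw [Finset.sum_comm]
  calc ∑ t ∈ range n, ∑ v ∈ s, (P ^ t) v u
      ≤ ∑ t ∈ range n, ∑ v, (P ^ t) v u := by
        refine sum_le_sum fun t _ => ?_
        exact sum_le_sum_of_subset_of_nonneg (subset_univ s)
          fun v _ _ => nonneg_of_mem_colStochastic (pow_mem hP t)
    _ = n := by simp [sum_col_of_mem_colStochastic (pow_mem hP _)]

theorem mul_le_sum_range_pow_apply {P : Matrix V V ℝ} {π : V → ℝ}
    (hP : P ∈ colStochastic ℝ V) (hrev : (P * diagonal π).IsSymm) (hπ : ∀ v, 0 < π v) {c : ℝ} {u v : V} {t t₀ : ℕ}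
    (ht : t ≤ t₀) (hc : c ≤ (P ^ t) u v / π u) :
    c * π v ≤ ∑ s ∈ range (t₀ + 1), (P ^ s) v u := by
  have hrev_t : (P ^ t) u v * π v = (P ^ t) v u * π u := by
    simpa using (hrev.pow_mul_diagonal t).apply v u
  have hcuv : c * π u * π v ≤ (P ^ t) v u * π u := by
    rw [← hrev_t]
    exact mul_le_mul_of_nonneg_right ((le_div_iff₀ (hπ u)).1 hc) (hπ v).le
  calc c * π v ≤ (P ^ t) v u := by nlinarith [hπ u]
    _ ≤ ∑ s ∈ range (t₀ + 1), (P ^ s) v u :=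
        single_le_sum (fun s _ => nonneg_of_mem_colStochastic (pow_mem hP s))
          (mem_range.2 (Nat.lt_succ_of_le ht))

theorem mul_sum_le_of_forall_exists_pow_apply_div {P : Matrix V V ℝ} {π : V → ℝ}
    (hP : P ∈ colStochastic ℝ V) (hrev : (P * diagonal π).IsSymm) (hπ : ∀ v, 0 < π v)
    {c : ℝ} (u : V) (t₀ : ℕ) (s : Finset V)
    (hs : ∀ v ∈ s, ∃ t ≤ t₀, c ≤ (P ^ t) u v / π u) :
    c * ∑ v ∈ s, π v ≤ t₀ + 1 := by
  calc c * ∑ v ∈ s, π v ≤ ∑ v ∈ s, ∑ t ∈ range (t₀ + 1), (P ^ t) v u := by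
        rw [mul_sum]
        refine sum_le_sum fun v hv => ?_
        obtain ⟨t, ht, hc⟩ := hs v hv
        exact mul_le_sum_range_pow_apply hP hrev hπ ht hc
    _ ≤ t₀ + 1 := by exact_mod_cast sum_range_pow_apply_le hP s u (t₀ + 1)

end Matrix

section LazyWalk

variable {V : Type*} [Fintype V] [DecidableEq V]

noncomputable def lazyWalk (A : Matrix V V ℝ) (deg : V → ℝ) : Matrix V V ℝ :=
  (1 / 2 : ℝ) • (A * diagonal (fun v => (deg v)⁻¹) + 1)

variable {A : Matrix V V ℝ} {deg : V → ℝ}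

theorem lazyWalk_apply (u v : V) :
    lazyWalk A deg u v = (A u v * (deg v)⁻¹ + if u = v then 1 else 0) / 2 := by
  simp [lazyWalk, mul_diagonal, one_apply, div_eq_inv_mul]

theorem lazyWalk_mem_colStochastic (hA : ∀ u v, 0 ≤ A u v) (hdeg : ∀ v, deg v = ∑ u, A u v)
    (hpos : ∀ v, 0 < deg v) : lazyWalk A deg ∈ colStochastic ℝ V := by
  refine mem_colStochastic_iff_sum.2 ⟨fun u v => ?_, fun v => ?_⟩
  · rw [lazyWalk_apply]
    have := mul_nonneg (hA u v) (inv_nonneg.2 (hpos v).le)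
    positivity
  · simp only [lazyWalk_apply, ← sum_div, sum_add_distrib, ← sum_mul, ← hdeg,
      mul_inv_cancel₀ (hpos v).ne', sum_ite_eq', mem_univ, if_true]
    norm_num

theorem lazyWalk_mul_diagonal (hdeg : ∀ v, deg v ≠ 0) :
    lazyWalk A deg * diagonal deg = (1 / 2 : ℝ) • (A + diagonal deg) := by
  simp [lazyWalk, Matrix.add_mul, Matrix.mul_assoc, diagonal_mul_diagonal,
    inv_mul_cancel₀ (hdeg _)]

theorem isSymm_lazyWalk_mul_diagonal (hA : A.IsSymm) (hdeg : ∀ v, deg v ≠ 0) :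
    (lazyWalk A deg * diagonal deg).IsSymm := by
  rw [lazyWalk_mul_diagonal hdeg]
  exact (hA.add (isSymm_diagonal deg)).smul _

end LazyWalk

open scoped Classical in
theorem volume_of_nibble_influence_sets_general
    {V : Type*} [Fintype V] [DecidableEq V]
    (A : Matrix V V ℝ) (hsymm : A.IsSymm) (hnonneg : ∀ u v, 0 ≤ A u v)
    (deg : V → ℝ) (hdeg : ∀ v, deg v = ∑ u, A u v) (hpos : ∀ v, 0 < deg v)
    (M : Matrix V V ℝ)
    (hM : M = (1 / 2 : ℝ) • (A * Matrix.diagonal (fun v => (deg v)⁻¹) + 1))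
    (t₀ : ℕ) (ε : ℝ) (hε : 0 < ε)
    (Z : V → Finset V)
    (hZ : ∀ u, Z u = Finset.univ.filter (fun v => ∃ t ≤ t₀, 2 * ε ≤ (M ^ t) u v / deg u)) :
    (∀ u : V, ∑ v ∈ Z u, deg v ≤ (t₀ + 1) / (2 * ε)) ∧
    (∀ u₁ u₂ : V, ∑ v ∈ Z u₁ ∪ Z u₂, deg v ≤ (t₀ + 1) / ε) := by
  change M = lazyWalk A deg at hM
  subst hM
  have hP := lazyWalk_mem_colStochastic hnonneg hdeg hpos
  have hrev := isSymm_lazyWalk_mul_diagonal hsymm fun v => (hpos v).ne'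
  have hvol : ∀ u, ∑ v ∈ Z u, deg v ≤ (t₀ + 1) / (2 * ε) := fun u => by
    rw [le_div_iff₀ (by positivity), mul_comm]
    refine mul_sum_le_of_forall_exists_pow_apply_div hP hrev hpos u t₀ (Z u) fun v hv => ?_
    rw [hZ u] at hv
    exact (mem_filter.1 hv).2
  refine ⟨hvol, fun u₁ u₂ => ?_⟩
  have hinter : 0 ≤ ∑ v ∈ Z u₁ ∩ Z u₂, deg v := sum_nonneg fun v _ => (hpos v).le
  have hunion := sum_union_inter (s₁ := Z u₁) (s₂ := Z u₂) (f := deg)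
  calc ∑ v ∈ Z u₁ ∪ Z u₂, deg v ≤ (t₀ + 1) / (2 * ε) + (t₀ + 1) / (2 * ε) := by
        linarith [hvol u₁, hvol u₂]
    _ = (t₀ + 1) / ε := by field_simp; ring

open scoped Classical in
/-- In the lazy random walk setting, let `t₀ ≥ 0` and `ε > 0`. For a vertex
`u` define `Z_u := {v : ρ_t^v(u) ≥ 2ε for some integer t ∈ [0, t₀]}` (note
`ρ_t^v(u) = (M^t χ_v)(u)/deg u = (M^t) u v / deg u`). Then `Vol(Z_u) ≤ (t₀+1)/(2ε)`, and for
any two vertices `u₁, u₂`, `Vol(Z_{u₁} ∪ Z_{u₂}) ≤ (t₀+1)/ε`. -/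
theorem volume_of_nibble_influence_sets
    {V : Type*} [Fintype V] [DecidableEq V] [Nonempty V]
    (A : Matrix V V ℝ) (hsymm : A.IsSymm) (hnonneg : ∀ u v, 0 ≤ A u v)
    (deg : V → ℝ) (hdeg : ∀ v, deg v = ∑ u, A u v) (hpos : ∀ v, 0 < deg v)
    (M : Matrix V V ℝ)
    (hM : M = (1 / 2 : ℝ) • (A * Matrix.diagonal (fun v => (deg v)⁻¹) + 1))
    (t₀ : ℕ) (ε : ℝ) (hε : 0 < ε)
    (Z : V → Finset V)
    (hZ : ∀ u, Z u = Finset.univ.filter (fun v => ∃ t ≤ t₀, 2 * ε ≤ (M ^ t) u v / deg u)) :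
    (∀ u : V, ∑ v ∈ Z u, deg v ≤ (t₀ + 1) / (2 * ε)) ∧
    (∀ u₁ u₂ : V, ∑ v ∈ Z u₁ ∪ Z u₂, deg v ≤ (t₀ + 1) / ε) :=
  volume_of_nibble_influence_sets_general A hsymm hnonneg deg hdeg hpos M hM t₀ ε hε Z hZ
end

section
/- Let G be a finite simple graph with vertex set V, let φ > 0, and let A ⊆ B ⊆ V be vertex sets satisfying |∂A| ≤ φ·Vol(A), Vol(B) ≤ (1+φ)·Vol(A), and Vol(B) ≤ Vol(V)/2. Then |∂B| ≤ 2φ·Vol(B); in particular, if Vol(B) > 0 then the conductance of the cut B satisfies Φ(B) ≤ 2φ. -/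
open Finset

/-- The volume of a vertex set: the sum of the degrees (in `G`) of its vertices. -/
def gvol {V : Type*} [Fintype V] (G : SimpleGraph V) [DecidableRel G.Adj]
    (S : Finset V) : ℕ :=
  ∑ v ∈ S, G.degree v

/-- The number of edges of `G` with one endpoint in `S` and the other in `T`
(for disjoint `S`, `T`, counted as ordered pairs `(s, t) ∈ S × T` with `s ~ t`). -/
def gcut {V : Type*} [Fintype V] [DecidableEq V] (G : SimpleGraph V) [DecidableRel G.Adj]
    (S T : Finset V) : ℕ :=
  ((S ×ˢ T).filter fun p => G.Adj p.1 p.2).card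

section

variable {V : Type*} [Fintype V] (G : SimpleGraph V) [DecidableRel G.Adj]

theorem gvol_mono {A B : Finset V} (hAB : A ⊆ B) : gvol G A ≤ gvol G B :=
  sum_le_sum_of_subset hAB

theorem card_filter_adj_le_degree (T : Finset V) (s : V) :
    #(T.filter (G.Adj s)) ≤ G.degree s := by
  rw [← SimpleGraph.card_neighborFinset_eq_degree]
  exact card_le_card fun t ht => by simpa using (mem_filter.1 ht).2

variable [DecidableEq V]

theorem gvol_sdiff_add_gvol {A B : Finset V} (hAB : A ⊆ B) :
    gvol G (B \ A) + gvol G A = gvol G B :=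
  sum_sdiff hAB

theorem gvol_add_gvol_compl (S : Finset V) :
    gvol G S + gvol G Sᶜ = gvol G univ :=
  sum_add_sum_compl S _

theorem gcut_eq_sum (S T : Finset V) : gcut G S T = ∑ s ∈ S, #(T.filter (G.Adj s)) := by
  rw [gcut, card_filter, sum_product]
  exact sum_congr rfl fun s _ => (card_filter _ _).symm

theorem gcut_le_gvol (S T : Finset V) : gcut G S T ≤ gvol G S := by
  rw [gcut_eq_sum]
  exact sum_le_sum fun s _ => card_filter_adj_le_degree G T s

theorem gcut_mono_right (S : Finset V) {T T' : Finset V} (hT : T ⊆ T') :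
    gcut G S T ≤ gcut G S T' := by
  simp only [gcut_eq_sum]
  exact sum_le_sum fun s _ => card_le_card (filter_subset_filter _ hT)

theorem gcut_sdiff_add_gcut {A B : Finset V} (hAB : A ⊆ B) (T : Finset V) :
    gcut G (B \ A) T + gcut G A T = gcut G B T := by
  simp only [gcut_eq_sum]
  exact sum_sdiff hAB

/-- Enlarging `A` to `B` adds at most `Vol(B \ A)` boundary edges: every new boundary edge
leaves `B \ A`, and every old one leaving `B` already left `A`. -/
theorem gcut_compl_le_of_subset {A B : Finset V} (hAB : A ⊆ B) :
    gcut G B Bᶜ ≤ gcut G A Aᶜ + gvol G (B \ A) := by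
  rw [← gcut_sdiff_add_gcut G hAB]
  have hnew := gcut_le_gvol G (B \ A) Bᶜ
  have hold := gcut_mono_right G A (compl_subset_compl.2 hAB)
  omega

end

/-- Let `G` be a finite simple graph, `φ > 0`, and `A ⊆ B` vertex sets with
`|∂A| ≤ φ·Vol(A)`, `Vol(B) ≤ (1+φ)·Vol(A)`, and `Vol(B) ≤ Vol(V)/2`. Then
`|∂B| ≤ 2φ·Vol(B)`; in particular, if `Vol(B) > 0` then the conductance
`Φ(B) = |∂B| / min(Vol B, Vol Bᶜ)` satisfies `Φ(B) ≤ 2φ`. -/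
theorem boundary_of_slightly_larger_set_small_side
    {V : Type*} [Fintype V] [DecidableEq V] (G : SimpleGraph V) [DecidableRel G.Adj]
    (φ : ℝ) (hφ : 0 < φ) (A B : Finset V) (hAB : A ⊆ B)
    (hbA : (gcut G A Aᶜ : ℝ) ≤ φ * gvol G A)
    (hvolB : (gvol G B : ℝ) ≤ (1 + φ) * gvol G A)
    (hhalf : (gvol G B : ℝ) ≤ (gvol G Finset.univ : ℝ) / 2) :
    (gcut G B Bᶜ : ℝ) ≤ 2 * φ * gvol G B ∧
    (0 < gvol G B →
      (gcut G B Bᶜ : ℝ) / min (gvol G B : ℝ) (gvol G Bᶜ : ℝ) ≤ 2 * φ) := by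
  have hcut : (gcut G B Bᶜ : ℝ) ≤ gcut G A Aᶜ + gvol G (B \ A) := by
    exact_mod_cast gcut_compl_le_of_subset G hAB
  have hsplit : (gvol G (B \ A) : ℝ) + gvol G A = gvol G B := by
    exact_mod_cast gvol_sdiff_add_gvol G hAB
  have hAB_vol : (gvol G A : ℝ) ≤ gvol G B := by exact_mod_cast gvol_mono G hAB
  have hbound : (gcut G B Bᶜ : ℝ) ≤ 2 * φ * gvol G B :=
    calc (gcut G B Bᶜ : ℝ) ≤ φ * gvol G A + (gvol G B - gvol G A) := by linarith
      _ ≤ 2 * φ * gvol G A := by linarith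
      _ ≤ 2 * φ * gvol G B := by gcongr
  refine ⟨hbound, fun hpos => ?_⟩
  have htotal : (gvol G B : ℝ) + gvol G Bᶜ = gvol G univ := by
    exact_mod_cast gvol_add_gvol_compl G B
  rw [min_eq_left (by linarith), div_le_iff₀ (by exact_mod_cast hpos)]
  exact hbound
end

section
/- For every finite simple graph G = (V, E) with m := |E| ≥ 1 edges and every φ ∈ (0,1), there exists a partition V = V_1 ∪ … ∪ V_x such that: (1) for every part V_i and every subset S ⊆ V_i, |E(S, V_i ∖ S)| ≥ φ·min(Vol(S), Vol(V_i ∖ S)), where volumes are taken with respect to degrees in G; and (2) the number of edges of G whose endpoints lie in different parts is at most 2φ·m·log₂(2m). -/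
/-!
Recursively split off a cut of conductance below `φ`, always recursing into both sides. The
potential `2φ · Vol(t) · log₂ Vol(t)` pays for the recursion: the cut costs less than
`2φ · Vol(S)` ordered pairs, where `S` is the side of smaller volume, and
`log₂ (Vol S + Vol T) ≥ log₂ Vol S + 1` because `Vol S ≤ Vol T`. At the top level
`Vol V = 2m`.
-/

open Finset

namespace Finpartition

variable {α : Type*} [DistribLattice α] [OrderBot α] [DecidableEq α] {a b c : α}

def disjUnion (P : Finpartition a) (Q : Finpartition b) (hab : Disjoint a b) (hc : a ⊔ b = c) :
    Finpartition c where
  parts := P.parts ∪ Q.parts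
  supIndep := by
    rw [Finset.supIndep_iff_pairwiseDisjoint, coe_union]
    refine P.disjoint.union Q.disjoint fun u hu v hv _ => ?_
    exact hab.mono (P.le hu) (Q.le hv)
  sup_parts := by rw [sup_union, P.sup_parts, Q.sup_parts, hc]
  bot_notMem h := (mem_union.1 h).elim (fun h => P.bot_notMem h) fun h => Q.bot_notMem h

@[simp]
lemma parts_disjUnion (P : Finpartition a) (Q : Finpartition b) (hab : Disjoint a b)
    (hc : a ⊔ b = c) : (P.disjUnion Q hab hc).parts = P.parts ∪ Q.parts :=
  rfl

end Finpartition

section ExpanderDecomposition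

variable {V : Type*} [Fintype V] [DecidableEq V] (G : SimpleGraph V) [DecidableRel G.Adj]

lemma gvol_add_gvol_sdiff {S t : Finset V} (h : S ⊆ t) : gvol G S + gvol G (t \ S) = gvol G t :=
  (add_comm _ _).trans (sum_sdiff h)

omit [DecidableEq V] in
lemma nonempty_of_gvol_pos {S : Finset V} (h : 0 < gvol G S) : S.Nonempty :=
  nonempty_of_sum_ne_zero h.ne'

lemma gcut_comm (S T : Finset V) : gcut G S T = gcut G T S :=
  card_nbij' Prod.swap Prod.swap (fun p hp => by simp_all [G.adj_comm])
    (fun p hp => by simp_all [G.adj_comm]) (fun _ _ => rfl) fun _ _ => rfl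

/-- `G[t]` has conductance at least `φ`, volumes being measured with the degrees of `G`. -/
def IsExpander (φ : ℝ) (t : Finset V) : Prop :=
  ∀ S ⊆ t, φ * min (gvol G S : ℝ) (gvol G (t \ S)) ≤ gcut G S (t \ S)

def crossCount {t : Finset V} (P : Finpartition t) : ℕ :=
  #((t ×ˢ t).filter fun p => G.Adj p.1 p.2 ∧ ∀ u ∈ P.parts, ¬(p.1 ∈ u ∧ p.2 ∈ u))

lemma crossCount_top (t : Finset V) : crossCount G (⊤ : Finpartition t) = 0 := by
  refine card_eq_zero.2 (filter_eq_empty_iff.2 fun p hp ⟨_, hsep⟩ => ?_)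
  obtain ⟨ha, hb⟩ := mem_product.1 hp
  obtain ⟨u, hu, hau⟩ := (⊤ : Finpartition t).exists_mem ha
  obtain rfl := mem_singleton.1 (Finpartition.parts_top_subset t hu)
  exact hsep u hu ⟨hau, hb⟩

lemma crossCount_disjUnion_le {S T t : Finset V} (P : Finpartition S) (Q : Finpartition T)
    (hST : Disjoint S T) (ht : S ⊔ T = t) :
    crossCount G (P.disjUnion Q hST ht) ≤
      crossCount G P + crossCount G Q + gcut G S T + gcut G T S := by
  subst ht
  refine (card_le_card fun p hp => ?_).trans <| (card_union_le _ _).trans <|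
    Nat.add_le_add_right ((card_union_le _ _).trans <|
      Nat.add_le_add_right (card_union_le _ _) _) _
  simp only [mem_filter, mem_product, Finpartition.parts_disjUnion, mem_union] at hp
  obtain ⟨⟨ha, hb⟩, hadj, hsep⟩ := hp
  simp only [mem_union, mem_filter, mem_product]
  rcases mem_union.1 ha with ha | ha <;> rcases mem_union.1 hb with hb | hb
  · exact .inl <| .inl <| .inl ⟨⟨ha, hb⟩, hadj, fun u hu => hsep u (.inl hu)⟩
  · exact .inl <| .inr ⟨⟨ha, hb⟩, hadj⟩
  · exact .inr ⟨⟨ha, hb⟩, hadj⟩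
  · exact .inl <| .inl <| .inr ⟨⟨ha, hb⟩, hadj, fun u hu => hsep u (.inr hu)⟩

variable {G} in
lemma exists_sparse_cut {φ : ℝ} {t : Finset V} (h : ¬IsExpander G φ t) :
    ∃ S ⊆ t, gvol G S ≤ gvol G (t \ S) ∧ (gcut G S (t \ S) : ℝ) < φ * gvol G S := by
  obtain ⟨S, hSt, hS⟩ := not_forall₂.1 h
  rw [not_le] at hS
  rcases le_total (gvol G S) (gvol G (t \ S)) with hle | hle
  · exact ⟨S, hSt, hle, by rwa [min_eq_left (by exact_mod_cast hle)] at hS⟩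
  · refine ⟨t \ S, sdiff_subset, ?_, ?_⟩ <;> rw [Finset.sdiff_sdiff_eq_self hSt]
    · exact hle
    · rwa [gcut_comm, ← min_eq_right (by exact_mod_cast hle : (gvol G (t \ S) : ℝ) ≤ gvol G S)]

lemma mul_logb_add_mul_logb_le_of_le {a b : ℝ} (ha : 0 < a) (hab : a ≤ b) :
    a * (Real.logb 2 a + 1) + b * Real.logb 2 b ≤ (a + b) * Real.logb 2 (a + b) := by
  have hlog_a : Real.logb 2 a + 1 ≤ Real.logb 2 (a + b) := by
    rw [← Real.logb_self_eq_one one_lt_two, ← Real.logb_mul ha.ne' two_ne_zero]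
    exact Real.logb_le_logb_of_le one_lt_two (by positivity) (by linarith)
  have hlog_b : Real.logb 2 b ≤ Real.logb 2 (a + b) :=
    Real.logb_le_logb_of_le one_lt_two (by linarith) (by linarith)
  linarith [mul_le_mul_of_nonneg_left hlog_a ha.le,
    mul_le_mul_of_nonneg_left hlog_b (ha.le.trans hab)]

lemma exists_expander_finpartition {φ : ℝ} (hφ : 0 ≤ φ) (t : Finset V) :
    ∃ P : Finpartition t, (∀ u ∈ P.parts, IsExpander G φ u) ∧
      (crossCount G P : ℝ) ≤ 2 * φ * gvol G t * Real.logb 2 (gvol G t) := by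
  induction t using Finset.strongInduction with
  | H t ih =>
  by_cases ht : IsExpander G φ t
  · refine ⟨⊤, fun u hu => ?_, ?_⟩
    · rwa [mem_singleton.1 (Finpartition.parts_top_subset t hu)]
    · rw [crossCount_top, Nat.cast_zero]
      have : 0 ≤ Real.logb 2 (gvol G t) :=
        div_nonneg (Real.log_natCast_nonneg _) (Real.log_nonneg one_le_two)
      positivity
  obtain ⟨S, hSt, hle, hcut⟩ := exists_sparse_cut ht
  have hS : 0 < gvol G S := Nat.pos_of_ne_zero fun h0 => by
    rw [h0, Nat.cast_zero, mul_zero] at hcut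
    exact (Nat.cast_nonneg _).not_gt hcut
  have hT : (t \ S).Nonempty := nonempty_of_gvol_pos G (hS.trans_le hle)
  have hSsub : S ⊂ t := hSt.ssubset_of_not_subset (sdiff_nonempty.1 hT)
  have hTsub : t \ S ⊂ t := sdiff_ssubset hSt (nonempty_of_gvol_pos G hS)
  obtain ⟨P, hP, hPcross⟩ := ih S hSsub
  obtain ⟨Q, hQ, hQcross⟩ := ih (t \ S) hTsub
  refine ⟨P.disjUnion Q disjoint_sdiff (union_sdiff_of_subset hSt), ?_, ?_⟩
  · simp only [Finpartition.parts_disjUnion, mem_union]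
    exact fun u hu => hu.elim (hP u) (hQ u)
  have hcross := crossCount_disjUnion_le G P Q disjoint_sdiff (union_sdiff_of_subset hSt)
  rw [gcut_comm G (t \ S)] at hcross
  replace hcross := (Nat.cast_le (α := ℝ)).2 hcross
  have hcharge := mul_le_mul_of_nonneg_left
    (mul_logb_add_mul_logb_le_of_le (Nat.cast_pos.2 hS)
      (Nat.cast_le.2 hle : (gvol G S : ℝ) ≤ gvol G (t \ S)))
    (by positivity : (0 : ℝ) ≤ 2 * φ)
  rw [← gvol_add_gvol_sdiff G hSt]
  push_cast at hcross ⊢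
  linarith

end ExpanderDecomposition

theorem expander_decomposition_exists_general
    {V : Type*} [Fintype V] [DecidableEq V] (G : SimpleGraph V) [DecidableRel G.Adj]
    (m : ℕ) (hm : m = G.edgeFinset.card)
    (φ : ℝ) (hφ0 : 0 < φ) :
    ∃ P : Finpartition (Finset.univ : Finset V),
      (∀ t ∈ P.parts, ∀ S ⊆ t,
        φ * min (gvol G S : ℝ) (gvol G (t \ S) : ℝ) ≤ (gcut G S (t \ S) : ℝ)) ∧
      (((Finset.univ.filter fun p : V × V =>
          G.Adj p.1 p.2 ∧ ∀ t ∈ P.parts, ¬(p.1 ∈ t ∧ p.2 ∈ t)).card : ℝ) / 2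
        ≤ 2 * φ * m * Real.logb 2 (2 * m)) := by
  obtain ⟨P, hexp, hcross⟩ := exists_expander_finpartition G hφ0.le univ
  refine ⟨P, hexp, ?_⟩
  have hvol : gvol G univ = 2 * m := hm ▸ G.sum_degrees_eq_twice_card_edges
  rw [crossCount, univ_product_univ, hvol] at hcross
  push_cast at hcross
  linarith

/-- For every finite simple graph `G = (V, E)` with `m := |E| ≥ 1` edges and
every `φ ∈ (0,1)`, there exists a partition `V = V₁ ∪ ⋯ ∪ V_x` such that: (1) for every part
`Vᵢ` and every `S ⊆ Vᵢ`, `|E(S, Vᵢ ∖ S)| ≥ φ·min(Vol S, Vol(Vᵢ ∖ S))` (volumes w.r.t. degrees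
in `G`); and (2) the number of edges of `G` whose endpoints lie in different parts (here
counted as ordered adjacent pairs, divided by `2`) is at most `2φ·m·log₂(2m)`. -/
theorem expander_decomposition_exists
    {V : Type*} [Fintype V] [DecidableEq V] (G : SimpleGraph V) [DecidableRel G.Adj]
    (m : ℕ) (hm : m = G.edgeFinset.card) (hm1 : 1 ≤ m)
    (φ : ℝ) (hφ0 : 0 < φ) (hφ1 : φ < 1) :
    ∃ P : Finpartition (Finset.univ : Finset V),
      (∀ t ∈ P.parts, ∀ S ⊆ t,
        φ * min (gvol G S : ℝ) (gvol G (t \ S) : ℝ) ≤ (gcut G S (t \ S) : ℝ)) ∧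
      (((Finset.univ.filter fun p : V × V =>
          G.Adj p.1 p.2 ∧ ∀ t ∈ P.parts, ¬(p.1 ∈ t ∧ p.2 ∈ t)).card : ℝ) / 2
        ≤ 2 * φ * m * Real.logb 2 (2 * m)) :=
  expander_decomposition_exists_general G m hm φ hφ0
end

section
/- Let G be a finite simple graph with vertex set V, let a ≥ 1 be an integer and V_D' ⊆ V. Let W_0 := {u ∈ V : dist_G(u, V_D') ≤ a}, let S be the vertex set of a connected component of G[W_0], let s, t ∈ S, and let k be a positive integer with dist_{G[S]}(s,t) ≥ (4a+1)·k. Then there exist k+1 vertices v_0, …, v_k ∈ V_D' ∩ S such that dist_{G[S]}(s, v_i) ≤ (4a+1)·k + a for every 0 ≤ i ≤ k, and dist_G(v_i, v_j) > 2a for all 0 ≤ i < j ≤ k. -/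
/-!
Walk along a shortest `s`–`t` path in `G[S]` and stop every `4a + 1` steps. Each stop lies in
`W₀`, so it is within `a` of a vertex of `V_D'`; a shortest `G`-path to that vertex stays in `W₀`
and hence in the component `S`, so the chosen centre is also within `a` of the stop in `G[S]`.
If two centres were within `2a` in `G`, the same argument (every vertex of a path of length
`≤ 2a` between them is within `a` of one end) would put them within `2a` in `G[S]`, and the
corresponding stops within `4a` in `G[S]`, contradicting that they are `≥ 4a + 1` apart on a
shortest path.
-/

/-- The subgraph of `G` induced by the vertex set `S`, viewed as a graph on all of `V`
(vertices outside `S` are isolated). Distances between vertices of `S` in this graph agree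
with distances in the induced subgraph `G[S]`. -/
def SimpleGraph.restrictS {V : Type*} (G : SimpleGraph V) (S : Set V) : SimpleGraph V where
  Adj u v := u ∈ S ∧ v ∈ S ∧ G.Adj u v
  symm := ⟨fun u v ⟨hu, hv, h⟩ => ⟨hv, hu, h.symm⟩⟩
  loopless := ⟨fun u ⟨_, _, h⟩ => G.ne_of_adj h rfl⟩

namespace SimpleGraph

variable {V : Type*} {G : SimpleGraph V} {u v x : V}

def cthickening (G : SimpleGraph V) (a : ℕ) (D : Set V) : Set V :=
  {u | ∃ w ∈ D, G.edist u w ≤ a}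

def componentIn (G : SimpleGraph V) (W : Set V) (s : V) : Set V :=
  {v | v ∈ W ∧ (G.restrictS W).Reachable s v}

lemma restrictS_le (S : Set V) : G.restrictS S ≤ G := fun _ _ h => h.2.2

namespace Walk

lemma length_takeUntil_add_length_dropUntil [DecidableEq V] (p : G.Walk u v)
    (hx : x ∈ p.support) :
    (p.takeUntil x hx).length + (p.dropUntil x hx).length = p.length := by
  rw [← length_append, take_spec]

lemma edist_getVert_le (p : G.Walk u v) (n : ℕ) : G.edist u (p.getVert n) ≤ n :=
  (edist_le (p.take n)).trans (by simp)

lemma edist_getVert_le_length_sub (p : G.Walk u v) (n : ℕ) :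
    G.edist (p.getVert n) v ≤ (p.length - n : ℕ) :=
  (edist_le (p.drop n)).trans (by simp)

lemma sub_le_edist_getVert (p : G.Walk u v) (hp : (p.length : ℕ∞) = G.edist u v) {i j : ℕ}
    (hj : j ≤ p.length) : ((j - i : ℕ) : ℕ∞) ≤ G.edist (p.getVert i) (p.getVert j) := by
  have hlen : (p.length : ℕ∞) ≤ i + G.edist (p.getVert i) (p.getVert j) + (p.length - j : ℕ) :=
    hp ▸ calc G.edist u v
        ≤ G.edist u (p.getVert i) + G.edist (p.getVert i) (p.getVert j) +
            G.edist (p.getVert j) v :=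
          SimpleGraph.edist_triangle.trans (by gcongr; exact SimpleGraph.edist_triangle)
      _ ≤ _ := by gcongr <;> simp only [edist_getVert_le, edist_getVert_le_length_sub]
  cases h : G.edist (p.getVert i) (p.getVert j) using ENat.recTopCoe with
  | top => exact le_top
  | coe d =>
    rw [h] at hlen
    norm_cast at hlen ⊢
    omega

def toRestrictS {S : Set V} (p : G.Walk u v) (hp : ∀ y ∈ p.support, y ∈ S) :
    (G.restrictS S).Walk u v :=
  p.transfer _ fun e he => by
    induction e using Sym2.ind with
    | _ y z =>
      exact ⟨hp y (p.fst_mem_support_of_mem_edges he), hp z (p.snd_mem_support_of_mem_edges he),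
        p.adj_of_mem_edges he⟩

lemma edist_restrictS_le {S : Set V} (p : G.Walk u v) (hp : ∀ y ∈ p.support, y ∈ S) :
    (G.restrictS S).edist u v ≤ p.length :=
  (edist_le (p.toRestrictS hp)).trans_eq (by simp [toRestrictS])

lemma mem_of_mem_support_restrictS {S : Set V} {p : (G.restrictS S).Walk u v} (hu : u ∈ S)
    (hx : x ∈ p.support) : x ∈ S := by
  rw [← p.cons_tail_support, List.mem_cons, ← p.map_snd_darts, List.mem_map] at hx
  obtain rfl | ⟨d, -, rfl⟩ := hx
  exacts [hu, d.adj.2.1]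

lemma mem_componentIn_of_mem_support {W : Set V} {s : V} {p : G.Walk u v}
    (hu : u ∈ G.componentIn W s) (hp : ∀ y ∈ p.support, y ∈ W) (hx : x ∈ p.support) :
    x ∈ G.componentIn W s := by
  classical
  exact ⟨hp x hx, hu.2.trans
    ⟨(p.takeUntil x hx).toRestrictS fun y hy => hp y (p.support_takeUntil_subset_support hx hy)⟩⟩

lemma support_subset_cthickening {a : ℕ} {D : Set V} (p : G.Walk u v) (hv : v ∈ D)
    (hp : p.length ≤ a) : ∀ y ∈ p.support, y ∈ G.cthickening a D := fun y hy => by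
  classical
  exact ⟨v, hv, (edist_le (p.dropUntil y hy)).trans (by
    have := p.length_takeUntil_add_length_dropUntil hy
    exact_mod_cast (by omega : (p.dropUntil y hy).length ≤ a))⟩

lemma support_subset_cthickening_of_length_le_two_mul {a : ℕ} {D : Set V} (p : G.Walk u v)
    (hu : u ∈ D) (hv : v ∈ D) (hp : p.length ≤ 2 * a) :
    ∀ y ∈ p.support, y ∈ G.cthickening a D := fun y hy => by
  classical
  have := p.length_takeUntil_add_length_dropUntil hy
  by_cases hy' : (p.takeUntil y hy).length ≤ a
  · exact ⟨u, hu, (edist_le (p.takeUntil y hy).reverse).trans (by simpa using hy')⟩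
  · exact ⟨v, hv, (edist_le (p.dropUntil y hy)).trans (by
      exact_mod_cast (by omega : (p.dropUntil y hy).length ≤ a))⟩

end Walk

lemma reachable_restrictS_componentIn {W : Set V} {s t : V} (hs : s ∈ W)
    (ht : t ∈ G.componentIn W s) : (G.restrictS (G.componentIn W s)).Reachable s t := by
  obtain ⟨p⟩ := ht.2
  have hpW : ∀ y ∈ (p.mapLe (restrictS_le W)).support, y ∈ W := fun y hy =>
    p.mem_of_mem_support_restrictS hs (by simpa using hy)
  exact ⟨(p.mapLe _).toRestrictS fun y hy =>
    Walk.mem_componentIn_of_mem_support ⟨hs, .rfl⟩ hpW hy⟩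

section Component

variable {a : ℕ} {D : Set V} {s : V}

local notation "C" => G.componentIn (G.cthickening a D) s

lemma exists_mem_edist_restrictS_le (hx : x ∈ C) :
    ∃ v ∈ D ∩ C, (G.restrictS C).edist x v ≤ a := by
  obtain ⟨v, hvD, hxv⟩ := hx.1
  obtain ⟨p, hp⟩ := exists_walk_of_edist_ne_top (ne_top_of_le_ne_top (ENat.natCast_ne_top a) hxv)
  have hpa : p.length ≤ a := by exact_mod_cast hp ▸ hxv
  have hpW := p.support_subset_cthickening hvD hpa
  have hpC : ∀ y ∈ p.support, y ∈ C := fun y hy => Walk.mem_componentIn_of_mem_support hx hpW hy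
  exact ⟨v, ⟨hvD, hpC v p.end_mem_support⟩,
    (p.edist_restrictS_le hpC).trans (by exact_mod_cast hpa)⟩

lemma edist_restrictS_le_of_edist_le_two_mul {w : V} (hv : v ∈ D ∩ C) (hw : w ∈ D)
    (h : G.edist v w ≤ (2 * a : ℕ)) : (G.restrictS C).edist v w ≤ (2 * a : ℕ) := by
  obtain ⟨p, hp⟩ := exists_walk_of_edist_ne_top (ne_top_of_le_ne_top (ENat.natCast_ne_top _) h)
  have hpa : p.length ≤ 2 * a := by exact_mod_cast hp ▸ h
  have hpW := p.support_subset_cthickening_of_length_le_two_mul hv.1 hw hpa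
  exact (p.edist_restrictS_le fun y hy => Walk.mem_componentIn_of_mem_support hv.2 hpW hy).trans
    (by exact_mod_cast hpa)

lemma lt_edist_of_le_edist_restrictS {y w : V} (hv : v ∈ D ∩ C) (hw : w ∈ D)
    (hxv : (G.restrictS C).edist x v ≤ a) (hyw : (G.restrictS C).edist y w ≤ a)
    (hxy : ((4 * a + 1 : ℕ) : ℕ∞) ≤ (G.restrictS C).edist x y) :
    ((2 * a : ℕ) : ℕ∞) < G.edist v w := by
  by_contra! h
  have hx'y : (G.restrictS C).edist x y ≤ ((a + 2 * a + a : ℕ) : ℕ∞) := calc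
    _ ≤ (G.restrictS C).edist x v + (G.restrictS C).edist v w + (G.restrictS C).edist w y :=
        SimpleGraph.edist_triangle.trans (by gcongr; exact SimpleGraph.edist_triangle)
    _ ≤ a + (2 * a : ℕ) + a := by
        gcongr
        · exact edist_restrictS_le_of_edist_le_two_mul hv hw h
        · rwa [edist_comm]
    _ = _ := by push_cast; ring
  have := hxy.trans hx'y
  norm_cast at this
  omega

end Component

end SimpleGraph

theorem separated_centers_along_shortest_path_general
    {V : Type*} (G : SimpleGraph V)
    (a : ℕ) (VD : Set V)
    (W₀ : Set V) (hW₀ : W₀ = {u | ∃ w ∈ VD, G.edist u w ≤ (a : ℕ∞)})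
    (s t : V) (hs : s ∈ W₀)
    (S : Set V) (hS : S = {v | v ∈ W₀ ∧ (G.restrictS W₀).Reachable s v})
    (ht : t ∈ S)
    (k : ℕ)
    (hdist : (((4 * a + 1) * k : ℕ) : ℕ∞) ≤ (G.restrictS S).edist s t) :
    ∃ v : Fin (k + 1) → V,
      (∀ i, v i ∈ VD ∩ S) ∧
      (∀ i, (G.restrictS S).edist s (v i) ≤ (((4 * a + 1) * k + a : ℕ) : ℕ∞)) ∧
      (∀ i j, i ≠ j → ((2 * a : ℕ) : ℕ∞) < G.edist (v i) (v j)) := by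
  change W₀ = G.cthickening a VD at hW₀
  change S = G.componentIn W₀ s at hS
  subst hW₀ hS
  obtain ⟨p, hp⟩ := (SimpleGraph.reachable_restrictS_componentIn hs ht).exists_walk_length_eq_edist
  have hk : (4 * a + 1) * k ≤ p.length := by exact_mod_cast hp ▸ hdist
  have hkj (j : Fin (k + 1)) : (4 * a + 1) * j ≤ p.length :=
    (Nat.mul_le_mul_left _ (Nat.lt_succ_iff.mp j.isLt)).trans hk
  choose v hvD hxv using fun i : Fin (k + 1) => SimpleGraph.exists_mem_edist_restrictS_le
    (p.mem_of_mem_support_restrictS ⟨hs, .rfl⟩ (p.getVert_mem_support ((4 * a + 1) * i)))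
  have hsep (i j : Fin (k + 1)) (hij : i < j) : ((2 * a : ℕ) : ℕ∞) < G.edist (v i) (v j) := by
    refine SimpleGraph.lt_edist_of_le_edist_restrictS (hvD i) (hvD j).1 (hxv i) (hxv j)
      ((Nat.cast_le.2 ?_).trans (p.sub_le_edist_getVert hp (hkj j)))
    rw [← Nat.mul_sub]
    exact Nat.le_mul_of_pos_right _ (Nat.sub_pos_of_lt hij)
  refine ⟨v, hvD, fun i => ?_, fun i j hij => ?_⟩
  · calc _ ≤ _ := SimpleGraph.edist_triangle
      _ ≤ ((4 * a + 1) * i : ℕ) + a := add_le_add (p.edist_getVert_le _) (hxv i)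
      _ ≤ _ := by norm_cast; gcongr; exact Nat.lt_succ_iff.mp i.isLt
  · obtain h | h := hij.lt_or_gt
    exacts [hsep i j h, G.edist_comm ▸ hsep j i h]

/-- Lemma B.5. Let `a ≥ 1`, `V_D' ⊆ V`, and
`W₀ := {u : dist_G(u, V_D') ≤ a}`. Let `S` be the vertex set of a connected component of
`G[W₀]`, let `s, t ∈ S`, and let `k ≥ 1` with `dist_{G[S]}(s,t) ≥ (4a+1)·k`. Then there exist
`k+1` vertices `v₀, …, v_k ∈ V_D' ∩ S` with `dist_{G[S]}(s, vᵢ) ≤ (4a+1)·k + a` for all `i`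
and `dist_G(vᵢ, vⱼ) > 2a` for all `i ≠ j`. -/
theorem separated_centers_along_shortest_path
    {V : Type*} [Fintype V] (G : SimpleGraph V)
    (a : ℕ) (ha : 1 ≤ a) (VD : Set V)
    (W₀ : Set V) (hW₀ : W₀ = {u | ∃ w ∈ VD, G.edist u w ≤ (a : ℕ∞)})
    (s t : V) (hs : s ∈ W₀)
    (S : Set V) (hS : S = {v | v ∈ W₀ ∧ (G.restrictS W₀).Reachable s v})
    (ht : t ∈ S)
    (k : ℕ) (hk : 1 ≤ k)
    (hdist : (((4 * a + 1) * k : ℕ) : ℕ∞) ≤ (G.restrictS S).edist s t) :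
    ∃ v : Fin (k + 1) → V,
      (∀ i, v i ∈ VD ∩ S) ∧
      (∀ i, (G.restrictS S).edist s (v i) ≤ (((4 * a + 1) * k + a : ℕ) : ℕ∞)) ∧
      (∀ i j, i ≠ j → ((2 * a : ℕ) : ℕ∞) < G.edist (v i) (v j)) :=
  separated_centers_along_shortest_path_general G a VD W₀ hW₀ s t hs S hS ht k hdist
end

section
/- Let G be a finite simple graph with vertex set V in which every vertex has degree at least 1, let m := |E| ≥ 2, and let M be the lazy random walk matrix of G. Let φ ∈ (0,1], let ℓ := ⌈log₂ m⌉, let t₀ be a positive integer, and for each integer b ∈ [1, ℓ] set ε_b := φ / (56·ln(m·e⁴)·t₀·2^b). For a vertex u define Z_{u,b} := {v ∈ V : ρ_t^v(u) ≥ 2ε_b for some integer t ∈ [0, t₀]}, and for an edge e = {u₁, u₂} define Z_{e,b} := Z_{u₁,b} ∪ Z_{u₂,b}. Sample a vertex v ∈ V with probability deg(v)/Vol(V) and, independently, an integer b ∈ [1, ℓ] with probability Pr[b = i] = 2^{−i}/(1 − 2^{−ℓ}). Then for every edge e of G, Pr[v ∈ Z_{e,b}] ≤ 112·ℓ·(t₀+1)·t₀·ln(m·e⁴)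 / (φ·Vol(V)). -/
/-!
The degree vector `d` is invariant under the lazy walk, `M *ᵥ d = d`, hence also under `M ^ t`:
`∑ v, (M ^ t) u v * d v = d u`. By Markov's inequality the vertices `v` with
`(M ^ t) u v ≥ 2 ε_b · d u` have volume at most `1 / (2 ε_b)`; summing over `t ≤ t₀` and the two
endpoints gives `Vol(Z_{e,b}) ≤ (t₀ + 1) / ε_b`. Since `Pr[b = i] ≤ 2 · 2⁻ⁱ`, the factor `2 ^ b`
in `1 / ε_b` cancels and each of the `ℓ` values of `b` contributes the same bound.
-/

open Finset Matrix

namespace Matrix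

variable {n : Type*} [Fintype n] [DecidableEq n]

theorem pow_mulVec_of_mulVec_eq_self {α : Type*} [Semiring α] {P : Matrix n n α}
    {x : n → α} (hPx : P *ᵥ x = x) (t : ℕ) : (P ^ t) *ᵥ x = x := by
  induction t with
  | zero => exact one_mulVec x
  | succ t ih => rw [pow_succ, ← mulVec_mulVec, hPx, ih]

theorem sum_le_of_forall_exists_pow_apply_ge {P : Matrix n n ℝ} {d : n → ℝ}
    (hP : ∀ i j, 0 ≤ P i j) (hPd : P *ᵥ d = d) (hd : ∀ i, 0 ≤ d i) {u : n} (hu : 0 < d u)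
    {θ : ℝ} (hθ : 0 < θ) {T : ℕ} {s : Finset n}
    (hs : ∀ v ∈ s, ∃ t ≤ T, θ ≤ (P ^ t) u v / d u) :
    ∑ v ∈ s, d v ≤ (T + 1) / θ := by
  set w : n → ℝ := fun v => ∑ t ∈ range (T + 1), (P ^ t) u v * d v
  have hw_nonneg : ∀ v, 0 ≤ w v := fun v =>
    sum_nonneg fun t _ => mul_nonneg (pow_apply_nonneg hP t u v) (hd v)
  have hw_sum : ∑ v, w v = (T + 1) * d u := by
    calc ∑ v, w v = ∑ t ∈ range (T + 1), (P ^ t *ᵥ d) u := sum_comm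
      _ = (T + 1) * d u := by simp [pow_mulVec_of_mulVec_eq_self hPd]
  have hw_ge : ∀ v ∈ s, θ * d u * d v ≤ w v := by
    intro v hv
    obtain ⟨t, ht, hθt⟩ := hs v hv
    calc θ * d u * d v ≤ (P ^ t) u v * d v :=
          mul_le_mul_of_nonneg_right ((le_div_iff₀ hu).1 hθt) (hd v)
      _ ≤ w v := single_le_sum (f := fun t => (P ^ t) u v * d v)
          (fun t _ => mul_nonneg (pow_apply_nonneg hP t u v) (hd v))
          (mem_range.2 (Nat.lt_succ_of_le ht))
  rw [le_div_iff₀ hθ, ← mul_le_mul_iff_of_pos_right hu]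
  calc (∑ v ∈ s, d v) * θ * d u = ∑ v ∈ s, θ * d u * d v := by
        rw [sum_mul, sum_mul]
        exact sum_congr rfl fun v _ => by ring
    _ ≤ ∑ v ∈ s, w v := sum_le_sum hw_ge
    _ ≤ ∑ v, w v := sum_le_sum_of_subset_of_nonneg (subset_univ s) fun v _ _ => hw_nonneg v
    _ = (T + 1) * d u := hw_sum

end Matrix

namespace SimpleGraph

variable {V : Type*} [Fintype V] [DecidableEq V] (G : SimpleGraph V) [DecidableRel G.Adj]

noncomputable def lazyWalkMatrix : Matrix V V ℝ :=
  (1 / 2 : ℝ) • (G.adjMatrix ℝ * diagonal (fun v => ((G.degree v : ℝ))⁻¹) + 1)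

theorem lazyWalkMatrix_nonneg (u v : V) : 0 ≤ G.lazyWalkMatrix u v := by
  simp only [lazyWalkMatrix, Matrix.smul_apply, Matrix.add_apply, mul_diagonal, adjMatrix_apply,
    one_apply, smul_eq_mul]
  split_ifs <;> positivity

theorem lazyWalkMatrix_mulVec_degree (hdeg : ∀ v, G.degree v ≠ 0) :
    G.lazyWalkMatrix *ᵥ (fun v => (G.degree v : ℝ)) = fun v => (G.degree v : ℝ) := by
  have hdiag : diagonal (fun v => ((G.degree v : ℝ))⁻¹) *ᵥ (fun v => (G.degree v : ℝ)) =
      Function.const V 1 := by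
    ext v
    simp [mulVec_diagonal, hdeg v]
  ext v
  simp only [lazyWalkMatrix, smul_mulVec, add_mulVec, ← mulVec_mulVec, hdiag, one_mulVec,
    Pi.smul_apply, Pi.add_apply, adjMatrix_mulVec_const_apply, smul_eq_mul]
  ring

end SimpleGraph

theorem sum_Icc_geometric_weight_mul_le {ℓ : ℕ} {x : ℕ → ℝ} {K : ℝ}
    (hx_nonneg : ∀ i ∈ Icc 1 ℓ, 0 ≤ x i) (hx : ∀ i ∈ Icc 1 ℓ, x i ≤ 2 ^ i * K) :
    ∑ i ∈ Icc 1 ℓ, ((2 : ℝ) ^ i)⁻¹ / (1 - ((2 : ℝ) ^ ℓ)⁻¹) * x i ≤ 2 * ℓ * K := by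
  calc _ ≤ ∑ i ∈ Icc 1 ℓ, 2 * K := sum_le_sum fun i hi => ?_
    _ = 2 * ℓ * K := by rw [sum_const, Nat.card_Icc, nsmul_eq_mul]; push_cast; ring
  obtain ⟨hi1, hiℓ⟩ := mem_Icc.1 hi
  have hnorm : (2 : ℝ)⁻¹ ≤ 1 - ((2 : ℝ) ^ ℓ)⁻¹ := by
    linarith [inv_anti₀ two_pos (le_self_pow₀ (one_le_two (α := ℝ)) (by omega : ℓ ≠ 0))]
  have hweight : ((2 : ℝ) ^ i)⁻¹ / (1 - ((2 : ℝ) ^ ℓ)⁻¹) ≤ 2 * ((2 : ℝ) ^ i)⁻¹ := by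
    rw [div_le_iff₀ (by linarith)]
    nlinarith [inv_pos.2 (pow_pos (two_pos (α := ℝ)) i)]
  calc _ ≤ 2 * ((2 : ℝ) ^ i)⁻¹ * (2 ^ i * K) :=
        mul_le_mul hweight (hx i hi) (hx_nonneg i hi) (by positivity)
    _ = 2 * K := by field_simp

theorem random_nibble_edge_participation_probability_general
    {V : Type*} [Fintype V] [DecidableEq V]
    (G : SimpleGraph V) [DecidableRel G.Adj]
    (hdeg : ∀ v, 1 ≤ G.degree v)
    (m : ℕ) (hm2 : 2 ≤ m)
    (M : Matrix V V ℝ)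
    (hM : M = (1 / 2 : ℝ) •
      (G.adjMatrix ℝ * Matrix.diagonal (fun v => ((G.degree v : ℝ))⁻¹) + 1))
    (φ : ℝ) (hφ0 : 0 < φ)
    (ℓ : ℕ)
    (t₀ : ℕ) (ht₀ : 1 ≤ t₀)
    (ε : ℕ → ℝ)
    (hε : ∀ b, ε b = φ / (56 * Real.log (m * Real.exp 4) * t₀ * 2 ^ b))
    (Z : V → ℕ → Finset V)
    (hZ : ∀ u b v, v ∈ Z u b ↔ ∃ t ≤ t₀, 2 * ε b ≤ (M ^ t) u v / (G.degree u : ℝ))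
    (u₁ u₂ : V) :
    ∑ i ∈ Finset.Icc 1 ℓ,
        (((2 : ℝ) ^ i)⁻¹ / (1 - ((2 : ℝ) ^ ℓ)⁻¹)) *
          ((∑ v ∈ Z u₁ i ∪ Z u₂ i, (G.degree v : ℝ)) / ∑ v, (G.degree v : ℝ))
      ≤ 112 * ℓ * ((t₀ : ℝ) + 1) * t₀ * Real.log (m * Real.exp 4) /
          (φ * ∑ v, (G.degree v : ℝ)) := by
  set L := Real.log (m * Real.exp 4)
  set vol := ∑ v, (G.degree v : ℝ)
  have hdeg_pos : ∀ v, (0 : ℝ) < G.degree v := fun v => by exact_mod_cast hdeg v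
  have hL : 0 < L := Real.log_pos <|
    one_lt_mul_of_le_of_lt (by exact_mod_cast (by omega : 1 ≤ m)) (Real.one_lt_exp_iff.2 four_pos)
  have hε_pos : ∀ b, 0 < ε b := fun b => by rw [hε]; positivity
  have hM_invariant : M *ᵥ (fun v => (G.degree v : ℝ)) = fun v => (G.degree v : ℝ) :=
    hM ▸ G.lazyWalkMatrix_mulVec_degree fun v => Nat.one_le_iff_ne_zero.mp (hdeg v)
  have hZ_vol : ∀ u b, ∑ v ∈ Z u b, (G.degree v : ℝ) ≤ (t₀ + 1) / (2 * ε b) := fun u b =>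
    sum_le_of_forall_exists_pow_apply_ge (hM ▸ G.lazyWalkMatrix_nonneg) hM_invariant
      (fun v => (hdeg_pos v).le) (hdeg_pos u) (by linarith [hε_pos b])
      fun v => (hZ u b v).1
  refine (sum_Icc_geometric_weight_mul_le (K := 56 * L * t₀ * (t₀ + 1) / (φ * vol))
    (fun i _ => by positivity) fun i _ => ?_).trans_eq (by ring)
  have hunion := sum_union_inter (s₁ := Z u₁ i) (s₂ := Z u₂ i) (f := fun v => (G.degree v : ℝ))
  have hinter : 0 ≤ ∑ v ∈ Z u₁ i ∩ Z u₂ i, (G.degree v : ℝ) := by positivity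
  calc (∑ v ∈ Z u₁ i ∪ Z u₂ i, (G.degree v : ℝ)) / vol
      ≤ ((t₀ + 1) / (2 * ε i) + (t₀ + 1) / (2 * ε i)) / vol := by
        gcongr
        linarith [hZ_vol u₁ i, hZ_vol u₂ i]
    _ = 2 ^ i * (56 * L * t₀ * (t₀ + 1) / (φ * vol)) := by
        rw [hε]
        field_simp
        ring

/-- probability computation in Lemma 4.4, analysis of RandomNibble.
Let `G` be a finite simple graph with minimum degree at least `1`, `m := |E| ≥ 2`, `M` the
lazy random walk matrix, `φ ∈ (0,1]`, `ℓ := ⌈log₂ m⌉`, `t₀ ≥ 1`, and for `b ∈ [1, ℓ]` set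
`ε_b := φ / (56·ln(m·e⁴)·t₀·2^b)`. For a vertex `u`, `Z_{u,b}` is the set of `v` with
`ρ_t^v(u) = (M^t) u v / deg u ≥ 2ε_b` for some integer `t ∈ [0, t₀]`, and for an edge
`e = {u₁, u₂}`, `Z_{e,b} := Z_{u₁,b} ∪ Z_{u₂,b}`. Sampling `v` with probability
`deg v / Vol V` and, independently, `b ∈ [1, ℓ]` with `Pr[b = i] = 2^{−i}/(1 − 2^{−ℓ})`,
we have `Pr[v ∈ Z_{e,b}] ≤ 112·ℓ·(t₀+1)·t₀·ln(m·e⁴) / (φ·Vol V)`. -/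
theorem random_nibble_edge_participation_probability
    {V : Type*} [Fintype V] [DecidableEq V] [Nonempty V]
    (G : SimpleGraph V) [DecidableRel G.Adj]
    (hdeg : ∀ v, 1 ≤ G.degree v)
    (m : ℕ) (hm : m = G.edgeFinset.card) (hm2 : 2 ≤ m)
    (M : Matrix V V ℝ)
    (hM : M = (1 / 2 : ℝ) •
      (G.adjMatrix ℝ * Matrix.diagonal (fun v => ((G.degree v : ℝ))⁻¹) + 1))
    (φ : ℝ) (hφ0 : 0 < φ) (hφ1 : φ ≤ 1)
    (ℓ : ℕ) (hℓ : ℓ = Nat.clog 2 m)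
    (t₀ : ℕ) (ht₀ : 1 ≤ t₀)
    (ε : ℕ → ℝ)
    (hε : ∀ b, ε b = φ / (56 * Real.log (m * Real.exp 4) * t₀ * 2 ^ b))
    (Z : V → ℕ → Finset V)
    (hZ : ∀ u b v, v ∈ Z u b ↔ ∃ t ≤ t₀, 2 * ε b ≤ (M ^ t) u v / (G.degree u : ℝ))
    (u₁ u₂ : V) (he : G.Adj u₁ u₂) :
    ∑ i ∈ Finset.Icc 1 ℓ,
        (((2 : ℝ) ^ i)⁻¹ / (1 - ((2 : ℝ) ^ ℓ)⁻¹)) *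
          ((∑ v ∈ Z u₁ i ∪ Z u₂ i, (G.degree v : ℝ)) / ∑ v, (G.degree v : ℝ))
      ≤ 112 * ℓ * ((t₀ : ℝ) + 1) * t₀ * Real.log (m * Real.exp 4) /
          (φ * ∑ v, (G.degree v : ℝ)) :=
  random_nibble_edge_participation_probability_general G hdeg m hm2 M hM φ hφ0 ℓ t₀ ht₀ ε hε Z hZ u₁
    u₂
end
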